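/- Let L∨ be a finitely generated free abelian group, D_1,…,D_m ∈ L∨⊗ℝ, and for I ⊆ {1,…,m} let ∠_I = {Σ_{i∈I} a_i D_i : a_i > 0} (with ∠_∅ = {0}). Fix ω ∈ L∨⊗ℝ and set 𝒜_ω = {I ⊆ {1,…,m} : ω ∈ ∠_I}. Suppose that for every I ∈ 𝒜_ω the set {D_i : i ∈ I} spans L∨⊗ℝ. Then 𝒜_ω is closed under enlargement: if I ∈ 𝒜_ω and I ⊆ J ⊆ {1,…,m}, then J ∈ 𝒜_ω. -/
import Mathlib


open Finset

/-- The open cone of strictly positive combinations of `{D i : i ∈ I}`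
(with the convention `∠_∅ = {0}`, since the empty sum is `0`). -/
def angleCone {V : Type*} [AddCommGroup V] [Module ℝ V] {m : ℕ}
    (D : Fin m → V) (I : Finset (Fin m)) : Set V :=
  {v | ∃ a : Fin m → ℝ, (∀ i ∈ I, 0 < a i) ∧ v = ∑ i ∈ I, a i • D i}

/-- Choosing a uniform small `ε` for finitely many strict inequalities. -/
lemma exists_eps {α : Type*} (I : Finset α) (a s : α → ℝ)
    (ha : ∀ i ∈ I, 0 < a i) :
    ∃ ε : ℝ, 0 < ε ∧ ∀ i ∈ I, ε * s i < a i := by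
  classical
  induction I using Finset.induction with
  | empty => exact ⟨1, one_pos, by simp⟩
  | @insert x I hx ih =>
    obtain ⟨ε, hε, h⟩ := ih (fun i hi => ha i (Finset.mem_insert_of_mem hi))
    have hax : 0 < a x := ha x (Finset.mem_insert_self x I)
    have hden : 0 < |s x| + 1 := by positivity
    set δ : ℝ := min ε (a x / (2 * (|s x| + 1))) with hδdef
    have hδpos : 0 < δ := lt_min hε (by positivity)
    refine ⟨δ, hδpos, ?_⟩
    intro i hi
    rcases Finset.mem_insert.mp hi with rfl | hi
    · have h1 : δ * s i ≤ δ * |s i| := by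
        have := le_abs_self (s i)
        nlinarith
      have h2 : δ ≤ a i / (2 * (|s i| + 1)) := min_le_right _ _
      have h3 : δ * |s i| ≤ (a i / (2 * (|s i| + 1))) * |s i| := by
        have := abs_nonneg (s i)
        nlinarith
      have h4 : (a i / (2 * (|s i| + 1))) * |s i| < a i := by
        rw [div_mul_eq_mul_div, div_lt_iff₀ (by positivity)]
        have := abs_nonneg (s i)
        nlinarith
      linarith
    · rcases le_or_gt 0 (s i) with hs | hs
      · have : δ * s i ≤ ε * s i :=
          mul_le_mul_of_nonneg_right (min_le_left _ _) hs
        linarith [h i hi]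
      · have : δ * s i < 0 := mul_neg_of_pos_of_neg hδpos hs
        linarith [ha i (Finset.mem_insert_of_mem hi)]

/-- A vector in the span of `v '' I` is a finite combination over `I`. -/
lemma mem_span_image_finset {V : Type*} [AddCommGroup V] [Module ℝ V]
    {m : ℕ} {v : Fin m → V} {I : Finset (Fin m)} {x : V}
    (hx : x ∈ Submodule.span ℝ (v '' (I : Set (Fin m)))) :
    ∃ c : Fin m → ℝ, x = ∑ i ∈ I, c i • v i := by
  rw [Finsupp.mem_span_image_iff_linearCombination] at hx
  obtain ⟨l, hl, hlx⟩ := hx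
  refine ⟨l, ?_⟩
  rw [← hlx, Finsupp.linearCombination_apply]
  exact Finsupp.sum_of_support_subset l (by exact_mod_cast hl) _ (by simp)

/-- If every anticone `I ∈ 𝒜_ω` is such that `{D i : i ∈ I}` spans, then `𝒜_ω`
is closed under enlargement of sets. -/
theorem anticones_closed_under_enlargement
    {V : Type*} [AddCommGroup V] [Module ℝ V] [FiniteDimensional ℝ V]
    {m : ℕ} (D : Fin m → V) (ω : V)
    (hspan : ∀ I : Finset (Fin m), ω ∈ angleCone D I →
      Submodule.span ℝ (D '' (I : Set (Fin m))) = ⊤)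
    (I J : Finset (Fin m)) (hI : ω ∈ angleCone D I) (hIJ : I ⊆ J) :
    ω ∈ angleCone D J := by
  classical
  obtain ⟨a, hapos, haeq⟩ := hI
  have hsp := hspan I ⟨a, hapos, haeq⟩
  have hrep : ∀ j : Fin m, ∃ c : Fin m → ℝ, D j = ∑ i ∈ I, c i • D i := by
    intro j
    exact mem_span_image_finset (by rw [hsp]; trivial)
  choose c hc using hrep
  set s : Fin m → ℝ := fun i => ∑ j ∈ J \ I, c j i with hs
  obtain ⟨ε, hε, hεs⟩ := exists_eps I a s hapos
  refine ⟨fun i => if i ∈ I then a i - ε * s i else ε, ?_, ?_⟩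
  · intro i hi
    by_cases h : i ∈ I
    · simpa [h] using sub_pos.mpr (hεs i h)
    · simpa [h] using hε
  · have hsplit : ∑ j ∈ J, (if j ∈ I then a j - ε * s j else ε) • D j
        = (∑ j ∈ J \ I, (if j ∈ I then a j - ε * s j else ε) • D j)
          + ∑ j ∈ I, (if j ∈ I then a j - ε * s j else ε) • D j :=
      (Finset.sum_sdiff hIJ).symm
    have h1 : ∑ j ∈ J \ I, (if j ∈ I then a j - ε * s j else ε) • D j
        = ∑ i ∈ I, (ε * s i) • D i := by
      have : ∀ j ∈ J \ I, (if j ∈ I then a j - ε * s j else ε) • D j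
          = ∑ i ∈ I, (ε * c j i) • D i := by
        intro j hj
        have hj' : j ∉ I := (Finset.mem_sdiff.mp hj).2
        rw [if_neg hj', hc j, Finset.smul_sum]
        exact Finset.sum_congr rfl fun i _ => (smul_smul ε (c j i) (D i))
      rw [Finset.sum_congr rfl this, Finset.sum_comm]
      refine Finset.sum_congr rfl fun i _ => ?_
      rw [hs]
      simp only [Finset.mul_sum, Finset.sum_smul]
    have h2 : ∑ j ∈ I, (if j ∈ I then a j - ε * s j else ε) • D j
        = ∑ i ∈ I, (a i - ε * s i) • D i :=
      Finset.sum_congr rfl fun i hi => by rw [if_pos hi]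
    rw [hsplit, h1, h2, ← Finset.sum_add_distrib]
    rw [haeq]
    refine Finset.sum_congr rfl fun i _ => ?_
    rw [← add_smul]
    ring_nf
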